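/- Let O be a finite set and u an ultra-metric on O. Then the total weight ∑_{e∈T} w(e) of a minimum spanning tree T of w is the same for all weights w in the single-linkage fiber SL⁻¹(u) and all choices of minimum spanning tree T of w; in fact it equals the total weight of any minimum spanning tree of u. -/

import Mathlib

open SimpleGraph Finset

variable {V : Type*} [Fintype V] [DecidableEq V]

/-- Total weight of (the edge set of) a simple graph `T` under edge weights `w`. -/
noncomputable def totalWeight (w : Sym2 V → ℝ) (T : SimpleGraph V) : ℝ :=
  ∑ e ∈ (Set.toFinite T.edgeSet).toFinset, w e

/-- `T` is a minimum spanning tree of the complete graph on `V` with weights `w`. -/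
def IsMST (w : Sym2 V → ℝ) (T : SimpleGraph V) : Prop :=
  T.IsTree ∧ ∀ T' : SimpleGraph V, T'.IsTree → totalWeight w T ≤ totalWeight w T'

/-- A weight on the complete graph: nonnegative, vanishing on the diagonal. -/
def IsWeight (d : Sym2 V → ℝ) : Prop :=
  (∀ e, 0 ≤ d e) ∧ ∀ x : V, d s(x, x) = 0

/-- An ultra-metric, encoded as a function on unordered pairs. -/
def IsUltrametric (u : Sym2 V → ℝ) : Prop :=
  IsWeight u ∧ ∀ x y z : V, u s(x, z) ≤ max (u s(x, y)) (u s(y, z))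

/-- A (pseudo-)metric, encoded as a function on unordered pairs. -/
def IsMetric (d : Sym2 V → ℝ) : Prop :=
  IsWeight d ∧ ∀ x y z : V, d s(x, z) ≤ d s(x, y) + d s(y, z)

/-- The single linkage ultra-metric of a weight `d`. -/
noncomputable def SL (d : Sym2 V → ℝ) (e : Sym2 V) : ℝ :=
  sSup {r | ∃ u : Sym2 V → ℝ, IsUltrametric u ∧ u ≤ d ∧ u e = r}

/-- Maximum weight of an edge along a walk (0 for the empty walk). -/
noncomputable def pathMax (w : Sym2 V → ℝ) {T : SimpleGraph V} {x y : V}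
    (p : T.Walk x y) : ℝ :=
  (p.edges.map w).foldr max 0

/-- Sum of weights of the edges along a walk. -/
noncomputable def pathSum (w : Sym2 V → ℝ) {T : SimpleGraph V} {x y : V}
    (p : T.Walk x y) : ℝ :=
  (p.edges.map w).sum

/-- `alpha T hT w x y`: max weight of an edge on the unique path in the tree `T` from `x` to `y`. -/
noncomputable def alpha (T : SimpleGraph V) (hT : T.IsTree) (w : Sym2 V → ℝ)
    (x y : V) : ℝ :=
  pathMax w (hT.existsUnique_path x y).exists.choose

/-- `omega T hT w x y`: the tree metric, the sum of weights along the unique path in `T`. -/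
noncomputable def treeOmega (T : SimpleGraph V) (hT : T.IsTree) (w : Sym2 V → ℝ)
    (x y : V) : ℝ :=
  pathSum w (hT.existsUnique_path x y).exists.choose

/-- Ultra-metric as a two-variable function. -/
def IsUltrametricFn (u : V → V → ℝ) : Prop :=
  (∀ x y, 0 ≤ u x y) ∧ (∀ x, u x x = 0) ∧ (∀ x y, u x y = u y x) ∧
    ∀ x y z, u x z ≤ max (u x y) (u y z)

/-!
If `T` is a minimum spanning tree of `w`, the largest weight on the `T`-path between two points
is an ultra-metric below `w` (this is the cycle property of `T`), hence below `SL w ≤ w`. On an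
edge of `T` that path is the edge itself, so `w` and `SL w` agree on `T`; and `T` still has the
cycle property for `SL w`, which by the exchange argument makes `T` a minimum spanning tree of
`SL w = u` as well.
-/

lemma List.foldr_max_le_iff {α : Type*} [LinearOrder α] {l : List α} {a c : α} :
    l.foldr max a ≤ c ↔ a ≤ c ∧ ∀ x ∈ l, x ≤ c := by
  induction l with
  | nil => simp
  | cons b l ih => simp only [List.foldr_cons, max_le_iff, ih, List.forall_mem_cons]; tauto

lemma SimpleGraph.Walk.IsPath.ne_of_mem_edges {α : Type*} {G : SimpleGraph α} {x y : α}
    {p : G.Walk x y} (hp : p.IsPath) {f : Sym2 α} (hf : f ∈ p.edges) : x ≠ y :=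
  fun h ↦ List.ne_nil_of_mem hf (Walk.edges_eq_nil.2 (hp.nil_iff_eq.2 h))

section PathMax

variable {α : Type*} {T : SimpleGraph α} {w : Sym2 α → ℝ} {x y a b : α}

lemma pathMax_le_iff {c : ℝ} (p : T.Walk x y) :
    pathMax w p ≤ c ↔ 0 ≤ c ∧ ∀ f ∈ p.edges, w f ≤ c := by
  rw [pathMax, List.foldr_max_le_iff, List.forall_mem_map]

lemma le_pathMax {p : T.Walk x y} {f : Sym2 α} (hf : f ∈ p.edges) : w f ≤ pathMax w p :=
  List.le_max_of_le' 0 (List.mem_map_of_mem hf) le_rfl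

lemma pathMax_nonneg (p : T.Walk x y) : 0 ≤ pathMax w p :=
  ((pathMax_le_iff p).1 le_rfl).1

lemma pathMax_mono {p : T.Walk x y} {q : T.Walk a b} (h : p.edges ⊆ q.edges) :
    pathMax w p ≤ pathMax w q :=
  (pathMax_le_iff p).2 ⟨pathMax_nonneg q, fun _ hf ↦ le_pathMax (h hf)⟩

end PathMax

section TreeUltrametric

variable {α : Type*} {T : SimpleGraph α} (hT : T.IsTree) {w : Sym2 α → ℝ} {x y z : α}

lemma alpha_eq_pathMax {p : T.Walk x y} (hp : p.IsPath) : alpha T hT w x y = pathMax w p := by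
  rw [alpha, (hT.existsUnique_path x y).unique (hT.existsUnique_path x y).exists.choose_spec hp]

lemma alpha_comm : alpha T hT w x y = alpha T hT w y x := by
  obtain ⟨p, hp⟩ := (hT.existsUnique_path x y).exists
  rw [alpha_eq_pathMax hT hp, alpha_eq_pathMax hT hp.reverse]
  exact le_antisymm (pathMax_mono (by simp)) (pathMax_mono (by simp))

lemma alpha_self : alpha T hT w x x = 0 :=
  alpha_eq_pathMax hT Walk.IsPath.nil

lemma alpha_le_max : alpha T hT w x z ≤ max (alpha T hT w x y) (alpha T hT w y z) := by
  classical
  obtain ⟨p, hp⟩ := (hT.existsUnique_path x y).exists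
  obtain ⟨q, hq⟩ := (hT.existsUnique_path y z).exists
  rw [alpha_eq_pathMax hT hp, alpha_eq_pathMax hT hq,
    alpha_eq_pathMax hT ((p.append q).toPath).2, pathMax_le_iff]
  refine ⟨le_max_of_le_left (pathMax_nonneg p), fun f hf ↦ ?_⟩
  have hf := Walk.edges_toPath_subset_edges _ hf
  rw [Walk.edges_append, List.mem_append] at hf
  rcases hf with hf | hf
  · exact le_max_of_le_left (le_pathMax hf)
  · exact le_max_of_le_right (le_pathMax hf)

variable (w) in
noncomputable def treeUltrametric : Sym2 α → ℝ :=
  Sym2.lift ⟨alpha T hT w, fun _ _ ↦ alpha_comm hT⟩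

@[simp]
lemma treeUltrametric_mk : treeUltrametric hT w s(x, y) = alpha T hT w x y :=
  rfl

lemma isUltrametric_treeUltrametric : IsUltrametric (treeUltrametric hT w) :=
  ⟨⟨Sym2.ind fun _ _ ↦ pathMax_nonneg _, fun _ ↦ alpha_self hT⟩, fun _ _ _ ↦ alpha_le_max hT⟩

end TreeUltrametric

section SingleLinkage

variable {α : Type*} {v w : Sym2 α → ℝ}

lemma le_SL (hv : IsUltrametric v) (hvw : v ≤ w) : v ≤ SL w := fun e ↦
  le_csSup ⟨w e, by rintro _ ⟨v', -, hv'w, rfl⟩; exact hv'w e⟩ ⟨v, hv, hvw, rfl⟩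

lemma SL_le (hw : 0 ≤ w) : SL w ≤ w := fun e ↦
  csSup_le ⟨0, 0, ⟨⟨fun _ ↦ le_rfl, fun _ ↦ rfl⟩, fun _ _ _ ↦ by simp⟩, hw, rfl⟩
    (by rintro _ ⟨v, -, hvw, rfl⟩; exact hvw e)

end SingleLinkage

lemma SimpleGraph.IsTree.sup_edge_deleteEdges {α : Type*} [Finite α] {T : SimpleGraph α}
    (hT : T.IsTree) {x y : α} {p : T.Walk x y} (hp : p.IsPath) (hxy : ¬T.Adj x y)
    {f : Sym2 α} (hf : f ∈ p.edges) : ((T ⊔ edge x y).deleteEdges {f}).IsTree := by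
  have hne := hp.ne_of_mem_edges hf
  have hcycle : (Walk.cons (show (T ⊔ edge x y).Adj y x by simp [edge_adj, hne.symm])
      (p.mapLe le_sup_left)).IsCycle := by
    rw [Walk.cons_isCycle_iff, Walk.edges_mapLe_eq_edges]
    exact ⟨hp.mapLe _, fun h ↦ hxy (p.adj_of_mem_edges (Sym2.eq_swap ▸ h))⟩
  have hconn : ((T ⊔ edge x y).deleteEdges {f}).Connected := by
    induction f using Sym2.ind
    refine (hT.connected.mono le_sup_left).connected_delete_edge_of_not_isBridge ?_
    rw [isBridge_iff_forall_cycle_notMem (edgeSet_mono le_sup_left (p.edges_subset_edgeSet hf))]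
    push Not
    exact ⟨_, _, hcycle, by simp [hf]⟩
  rw [isTree_iff_connected_and_card] at hT ⊢
  refine ⟨hconn, ?_⟩
  rw [← hT.2, Nat.card_coe_set_eq, Nat.card_coe_set_eq, edgeSet_deleteEdges, edgeSet_sup,
    edgeSet_edge_of_ne hne, Set.union_singleton, Set.ncard_sdiff_singleton_of_mem,
    Set.ncard_insert_of_notMem (show s(x, y) ∉ T.edgeSet from hxy)]
  · simp
  · exact Set.mem_insert_of_mem _ (p.edges_subset_edgeSet hf)

lemma totalWeight_sup_edge_deleteEdges (w : Sym2 V → ℝ) {T : SimpleGraph V} {x y : V}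
    {f : Sym2 V} (hf : f ∈ T.edgeSet) (hxy : ¬T.Adj x y) (hne : x ≠ y) :
    totalWeight w ((T ⊔ edge x y).deleteEdges {f}) = totalWeight w T + w s(x, y) - w f := by
  have hedges : (Set.toFinite ((T ⊔ edge x y).deleteEdges {f}).edgeSet).toFinset =
      (insert s(x, y) (Set.toFinite T.edgeSet).toFinset).erase f := by
    ext
    simp only [deleteEdges_sup, edgeSet_sup, edgeSet_deleteEdges, edgeSet_edge_of_ne hne,
      Set.Finite.mem_toFinset, Set.mem_union, Set.mem_sdiff, Set.mem_singleton_iff, mem_erase,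
      ne_eq, mem_insert]
    tauto
  rw [totalWeight, hedges, sum_erase_eq_sub (by simp [hf]), sum_insert (by simpa using hxy),
    totalWeight, add_comm (w _)]

def CycleProperty {α : Type*} (w : Sym2 α → ℝ) (T : SimpleGraph α) : Prop :=
  ∀ ⦃x y : α⦄ (p : T.Walk x y), p.IsPath → ∀ f ∈ p.edges, w f ≤ w s(x, y)

lemma IsMST.cycleProperty {w : Sym2 V → ℝ} {T : SimpleGraph V} (h : IsMST w T) :
    CycleProperty w T := by
  intro x y p hp f hf
  by_cases hxy : T.Adj x y
  · obtain rfl : p = Path.singleton hxy :=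
      (h.1.existsUnique_path x y).unique hp (Path.singleton hxy).2
    simp_all [Path.singleton]
  · have := h.2 _ (h.1.sup_edge_deleteEdges hp hxy hf)
    rw [totalWeight_sup_edge_deleteEdges w (p.edges_subset_edgeSet hf) hxy
      (hp.ne_of_mem_edges hf)] at this
    linarith

lemma CycleProperty.exists_mem_edges_notMem_edgeSet_le {α : Type*} {w : Sym2 α → ℝ}
    {T G : SimpleGraph α} (hw : CycleProperty w T) (hT : T.IsTree) {x y : α} (hxy : T.Adj x y)
    (p : G.Walk x y) (he : s(x, y) ∉ p.edges) :
    ∃ f ∈ p.edges, f ∉ T.edgeSet ∧ w s(x, y) ≤ w f := by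
  -- `p` leaves the side `S` of `x` in `T - s(x, y)` along an edge `f`; the `T`-path joining the
  -- ends of `f` must use `s(x, y)`, so the cycle property bounds `w s(x, y)` by `w f`.
  set S := {v | (T.deleteEdges {s(x, y)}).Reachable x v}
  have hyS : y ∉ S := isAcyclic_iff_forall_adj_isBridge.1 hT.isAcyclic hxy
  obtain ⟨d, hd, hdS, hdS'⟩ := p.exists_boundary_dart S (Reachable.refl x) hyS
  have hdp : d.edge ∈ p.edges := List.mem_map_of_mem hd
  obtain ⟨q, hq⟩ := (hT.existsUnique_path d.fst d.snd).exists
  have heq : s(x, y) ∈ q.edges := by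
    by_contra h
    exact hdS' (hdS.trans ⟨q.toDeleteEdge _ h⟩)
  refine ⟨d.edge, hdp, fun hdT ↦ hdS' (hdS.trans (Adj.reachable ?_)), hw q hq _ heq⟩
  rw [deleteEdges_adj]
  exact ⟨hdT, fun h ↦ he (h ▸ hdp)⟩

lemma SimpleGraph.IsTree.isMST_of_cycleProperty {w : Sym2 V → ℝ} {T : SimpleGraph V}
    (hT : T.IsTree) (hw : CycleProperty w T) : IsMST w T := by
  refine ⟨hT, fun T' hT' ↦ ?_⟩
  -- Induction on the number of edges of `T` missing from `T'`: trading such an edge into `T'`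
  -- against the edge `f` found above does not increase the weight of `T'`.
  induction hn : (T.edgeSet \ T'.edgeSet).ncard using Nat.strong_induction_on
    generalizing T' with
  | _ n ih =>
  obtain hsub | ⟨e, heT, heT'⟩ := (T.edgeSet \ T'.edgeSet).eq_empty_or_nonempty
  · have hle : T ≤ T' := edgeSet_subset_edgeSet.1 (Set.sdiff_eq_empty.1 hsub)
    rw [le_antisymm hle ((isTree_iff_minimal_connected.1 hT').le_of_le hT.connected hle)]
  induction e using Sym2.ind with | _ x y =>
  have hxy : T.Adj x y := heT
  obtain ⟨p, hp⟩ := hT'.connected.exists_isPath x y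
  obtain ⟨f, hfp, hfT, hwf⟩ := hw.exists_mem_edges_notMem_edgeSet_le hT hxy p
    fun h ↦ heT' (p.edges_subset_edgeSet h)
  have hfT' : f ∈ T'.edgeSet := p.edges_subset_edgeSet hfp
  have hcard : (T.edgeSet \ ((T' ⊔ edge x y).deleteEdges {f}).edgeSet).ncard < n := by
    refine hn ▸ Set.ncard_lt_ncard ?_
    rw [edgeSet_deleteEdges, edgeSet_sup, edgeSet_edge_of_ne hxy.ne]
    refine (Set.ssubset_iff_of_subset ?_).2 ⟨s(x, y), ⟨heT, heT'⟩, ?_⟩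
    · rintro g ⟨hgT, hg⟩
      exact ⟨hgT, fun hgT' ↦ hg ⟨Or.inl hgT', fun hgf ↦ hfT (hgf ▸ hgT)⟩⟩
    · rintro ⟨-, he⟩
      exact he ⟨Or.inr rfl, fun hef ↦ heT' (hef ▸ hfT')⟩
  calc totalWeight w T ≤ totalWeight w ((T' ⊔ edge x y).deleteEdges {f}) :=
        ih _ hcard _ (hT'.sup_edge_deleteEdges hp heT' hfp) rfl
    _ = totalWeight w T' + w s(x, y) - w f :=
        totalWeight_sup_edge_deleteEdges w hfT' heT' hxy.ne
    _ ≤ totalWeight w T' := by linarith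

namespace IsMST

variable {w : Sym2 V → ℝ} {T : SimpleGraph V}

lemma treeUltrametric_le (hw : 0 ≤ w) (h : IsMST w T) : treeUltrametric h.1 w ≤ w :=
  Sym2.ind fun x y ↦ by
    obtain ⟨p, hp⟩ := (h.1.existsUnique_path x y).exists
    rw [treeUltrametric_mk, alpha_eq_pathMax h.1 hp, pathMax_le_iff]
    exact ⟨hw _, h.cycleProperty p hp⟩

lemma pathMax_le_SL (hw : 0 ≤ w) (h : IsMST w T) {x y : V} {p : T.Walk x y} (hp : p.IsPath) :
    pathMax w p ≤ SL w s(x, y) := by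
  rw [← alpha_eq_pathMax h.1 hp, ← treeUltrametric_mk]
  exact le_SL (isUltrametric_treeUltrametric h.1) (h.treeUltrametric_le hw) s(x, y)

lemma SL_eq_of_mem_edgeSet (hw : 0 ≤ w) (h : IsMST w T) {e : Sym2 V} (he : e ∈ T.edgeSet) :
    SL w e = w e := by
  induction e using Sym2.ind with | _ x y =>
  have hxy : T.Adj x y := he
  refine le_antisymm (SL_le hw _) ((le_pathMax ?_).trans
    (h.pathMax_le_SL hw (Path.singleton hxy).2))
  simp [Path.singleton]

lemma isMST_SL (hw : 0 ≤ w) (h : IsMST w T) : IsMST (SL w) T :=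
  h.1.isMST_of_cycleProperty fun _ _ p hp f hf ↦ by
    rw [h.SL_eq_of_mem_edgeSet hw (p.edges_subset_edgeSet hf)]
    exact (le_pathMax hf).trans (h.pathMax_le_SL hw hp)

lemma totalWeight_SL (hw : 0 ≤ w) (h : IsMST w T) : totalWeight (SL w) T = totalWeight w T :=
  sum_congr rfl fun _ he ↦ h.SL_eq_of_mem_edgeSet hw ((Set.Finite.mem_toFinset _).1 he)

end IsMST

theorem mst_weight_constant_on_fiber_general (u : Sym2 V → ℝ)
    (T₀ : SimpleGraph V) (hT₀ : IsMST u T₀) :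
    ∀ w : Sym2 V → ℝ, IsWeight w → SL w = u →
      ∀ T : SimpleGraph V, IsMST w T → totalWeight w T = totalWeight u T₀ := by
  rintro w hw rfl T hT
  rw [← hT.totalWeight_SL hw.1]
  exact le_antisymm ((hT.isMST_SL hw.1).2 T₀ hT₀.1) (hT₀.2 T hT.1)

/-- the total MST weight is constant on the single-linkage fiber of `u`,
and equals the total weight of any MST of `u`. -/
theorem mst_weight_constant_on_fiber (u : Sym2 V → ℝ) (hu : IsUltrametric u)
    (T₀ : SimpleGraph V) (hT₀ : IsMST u T₀) :
    ∀ w : Sym2 V → ℝ, IsWeight w → SL w = u →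
      ∀ T : SimpleGraph V, IsMST w T → totalWeight w T = totalWeight u T₀ :=
  mst_weight_constant_on_fiber_general u T₀ hT₀
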